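/- Let G be the complete directed graph on n ≥ 2 vertices with source s and let S be a finite sequence of edges of G. Then S is a valid relaxation sequence (i.e., S contains every simple path starting at s) if and only if for every edge-weight function w with no negative directed cycle, processing S by relaxations results in d(v) equal to the minimum total weight of a simple path from s to v, for every vertex v. -/

import Mathlib

/-- `S` is a valid relaxation sequence for the complete directed graph on vertex
type `α` with source `s`: `S` contains (as a subsequence, in order but not
necessarily contiguously) the edge sequence of every simple path starting at `s`. -/
def IsValidRelaxSeq {α : Type*} (s : α) (S : List (α × α)) : Prop :=
  ∀ p : List α, p ≠ [] → p.head? = some s → p.Nodup → (p.zip p.tail).Sublist S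

/-- Relaxing edge `e = (u, v)`: replace `d v` by `min (d v) (d u + w e)`. -/
noncomputable def relaxStep {α : Type*} [DecidableEq α] (w : α × α → ℝ) (d : α → EReal)
    (e : α × α) : α → EReal :=
  fun v => if v = e.2 then min (d v) (d e.1 + (w e : EReal)) else d v

/-- Processing a sequence of edges by relaxations, in order. -/
noncomputable def relaxList {α : Type*} [DecidableEq α] (w : α × α → ℝ) (d : α → EReal)
    (S : List (α × α)) : α → EReal :=
  S.foldl (relaxStep w) d

/-- Initial tentative distances: `d s = 0` and `d v = +∞` for `v ≠ s`. -/
noncomputable def initD {α : Type*} [DecidableEq α] (s : α) : α → EReal :=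
  fun v => if v = s then 0 else ⊤


open List
section Helpers
variable {α : Type*} [DecidableEq α]
set_option linter.unusedVariables false
set_option linter.unusedSectionVars false


lemma edges_cons_cons (x y : α) (t : List α) :
    (x::y::t).zip (x::y::t).tail = (x,y) :: (y::t).zip (y::t).tail := rfl

lemma edges_split (x : α) : ∀ (l₁ l₂ : List α),
    (l₁ ++ x :: l₂).zip (l₁ ++ x :: l₂).tail
      = (l₁ ++ [x]).zip (l₁ ++ [x]).tail ++ (x :: l₂).zip (x :: l₂).tail
  | [], l₂ => by simp
  | [y], l₂ => by simp [edges_cons_cons]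
  | y :: z :: t, l₂ => by
    have ih := edges_split x (z :: t) l₂
    simp only [cons_append] at *
    rw [edges_cons_cons, ih, edges_cons_cons]
    simp

lemma relaxStep_le (w : α × α → ℝ) (d : α → EReal) (e : α × α) (u : α) :
    relaxStep w d e u ≤ d u := by
  unfold relaxStep; split
  · exact min_le_left _ _
  · exact le_rfl

lemma relaxStep_mono {w : α × α → ℝ} {d d' : α → EReal} (h : ∀ u, d u ≤ d' u)
    (e : α × α) (u : α) : relaxStep w d e u ≤ relaxStep w d' e u := by
  unfold relaxStep; split
  · exact min_le_min (h u) (add_le_add_left (h e.1) _)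
  · exact h u

lemma relaxList_mono {w : α × α → ℝ} : ∀ (S : List (α × α)) {d d' : α → EReal},
    (∀ u, d u ≤ d' u) → ∀ u, relaxList w d S u ≤ relaxList w d' S u
  | [], d, d', h, u => h u
  | e :: S, d, d', h, u =>
    relaxList_mono S (fun u => relaxStep_mono h e u) u

lemma relaxList_le_self {w : α × α → ℝ} : ∀ (S : List (α × α)) (d : α → EReal) (u : α),
    relaxList w d S u ≤ d u
  | [], d, u => le_rfl
  | e :: S, d, u => le_trans (relaxList_le_self S _ u) (relaxStep_le w d e u)

lemma relaxList_sublist {w : α × α → ℝ} {L S : List (α × α)} (h : L.Sublist S) :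
    ∀ (d : α → EReal) (u : α), relaxList w d S u ≤ relaxList w d L u := by
  induction h with
  | slnil => exact fun d u => le_rfl
  | cons e h ih =>
    intro d u
    calc relaxList w d (e :: _) u ≤ relaxList w d _ u := by
          exact le_trans (relaxList_mono _ (fun u => relaxStep_le w d e u) u) le_rfl
      _ ≤ _ := ih d u
  | cons_cons e h ih => exact fun d u => ih (relaxStep w d e) u

lemma relaxList_concat (w : α × α → ℝ) (d : α → EReal) (T : List (α × α)) (e : α × α) :
    relaxList w d (T ++ [e]) = relaxStep w (relaxList w d T) e := by
  simp [relaxList, List.foldl_append]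


lemma relax_path (w : α × α → ℝ) : ∀ (t : List α) (y : α) (d : α → EReal),
    relaxList w d ((y::t).zip t) ((y::t).getLast (cons_ne_nil _ _))
      ≤ d y + ((((y::t).zip t).map w).sum : ℝ)
  | [], y, d => by simp [relaxList]
  | z :: t, y, d => by
    have ih := relax_path w t z (relaxStep w d (y, z))
    have h1 : relaxStep w d (y, z) z ≤ d y + (w (y, z) : EReal) := by
      simp only [relaxStep, if_pos rfl]
      exact min_le_right _ _
    have h2 : relaxList w (relaxStep w d (y,z)) ((z::t).zip t) ((z::t).getLast (cons_ne_nil _ _))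
        ≤ relaxStep w d (y,z) z + ((((z::t).zip t).map w).sum : ℝ) := ih
    have h3 : ((y::z::t).zip (z::t)) = (y,z) :: ((z::t).zip t) := rfl
    have h4 : (y::z::t).getLast (cons_ne_nil _ _) = (z::t).getLast (cons_ne_nil _ _) := by
      simp [List.getLast_cons]
    rw [h3, h4]
    show relaxList w (relaxStep w d (y,z)) ((z::t).zip t) _ ≤ _
    refine le_trans h2 ?_
    refine le_trans (add_le_add_left h1 _) ?_
    simp only [map_cons, sum_cons, EReal.coe_add, add_assoc]
    exact le_rfl


lemma edges_append_one {p : List α} {a : α} (hp : p ≠ []) (ha : p.getLast? = some a) (b : α) :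
    (p ++ [b]).zip (p ++ [b]).tail = p.zip p.tail ++ [(a, b)] := by
  have h1 : p.dropLast ++ [a] = p := by
    rw [List.getLast?_eq_getLast hp] at ha
    have := List.dropLast_append_getLast hp
    rwa [Option.some_inj.mp ha] at this
  calc (p ++ [b]).zip (p ++ [b]).tail
      = (p.dropLast ++ a :: [b]).zip (p.dropLast ++ a :: [b]).tail := by rw [← h1]; simp
    _ = (p.dropLast ++ [a]).zip (p.dropLast ++ [a]).tail ++ ([a,b].zip [b]) :=
        edges_split a _ [b]
    _ = p.zip p.tail ++ [(a,b)] := by rw [h1]; rfl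

lemma relax_walk_inv (w : α × α → ℝ) (s : α) :
    ∀ (S : List (α × α)), (∀ e ∈ S, e.1 ≠ e.2) → ∀ u,
      relaxList w (initD s) S u = ⊤ ∨
        ∃ p : List α, p ≠ [] ∧ p.head? = some s ∧ p.getLast? = some u ∧
          p.Chain' (· ≠ ·) ∧
          relaxList w (initD s) S u = ((((p.zip p.tail).map w).sum : ℝ) : EReal) := by
  intro S
  induction S using List.reverseRecOn with
  | nil =>
    intro _ u
    by_cases hu : u = s
    · subst hu
      refine Or.inr ⟨[u], by simp, by simp, by simp, by exact List.isChain_singleton u, ?_⟩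
      simp [relaxList, initD]
    · left; simp [relaxList, initD, hu]
  | append_singleton T e ih =>
    intro hS u
    have hT : ∀ e ∈ T, e.1 ≠ e.2 := fun e' he' => hS e' (by simp [he'])
    have he : e.1 ≠ e.2 := hS e (by simp)
    rw [relaxList_concat]
    by_cases hu : u = e.2
    · subst hu
      have hstep : relaxStep w (relaxList w (initD s) T) e e.2
          = min (relaxList w (initD s) T e.2) (relaxList w (initD s) T e.1 + (w e : EReal)) := by
        simp [relaxStep]
      rw [hstep]
      rcases le_total (relaxList w (initD s) T e.2)
          (relaxList w (initD s) T e.1 + (w e : EReal)) with hle | hle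
      · rw [min_eq_left hle]
        exact ih hT e.2
      · rw [hstep] at *
        rw [min_eq_right hle]
        rcases ih hT e.1 with h1 | ⟨p, hne, hh, hl, hc, hval⟩
        · left; rw [h1]; exact EReal.top_add_coe _
        · right
          refine ⟨p ++ [e.2], by simp, ?_, by simp, ?_, ?_⟩
          · cases p with
            | nil => exact absurd rfl hne
            | cons a t => exact hh
          · refine List.isChain_append.mpr ⟨hc, List.isChain_singleton _, ?_⟩
            intro x hx y hy
            simp at hy; subst hy
            rw [hl] at hx; simp at hx; subst hx
            exact he
          · rw [edges_append_one hne hl e.2, hval]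
            simp [EReal.coe_add]
    · have hstep : relaxStep w (relaxList w (initD s) T) e u = relaxList w (initD s) T u := by
        simp [relaxStep, hu]
      rw [hstep]
      exact ih hT u


lemma exists_dup_decomp {p : List α} (h : ¬ p.Nodup) :
    ∃ a x b c, p = a ++ x :: (b ++ x :: c) ∧ (a ++ x :: b).Nodup := by
  have hex : ∃ j, ¬ (p.take (j+1)).Nodup := ⟨p.length, by
    rwa [List.take_of_length_le (by omega)]⟩
  classical
  set j := Nat.find hex with hjdef
  have hj : ¬ (p.take (j+1)).Nodup := Nat.find_spec hex
  have hmin : ∀ i < j, (p.take (i+1)).Nodup := fun i hi => by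
    have := Nat.find_min hex hi
    simpa using this
  have htj : (p.take j).Nodup := by
    rcases Nat.eq_zero_or_pos j with h0 | h0
    · rw [h0]; simp
    · have := hmin (j-1) (by omega)
      rwa [Nat.sub_add_cancel h0] at this
  have hjlen : j < p.length := by
    by_contra hge
    rw [List.take_of_length_le (by omega)] at htj
    exact h htj
  set x := p[j] with hx
  have htake : p.take (j+1) = p.take j ++ [x] := by
    rw [List.take_succ, List.getElem?_eq_getElem hjlen]
    rfl
  have hxmem : x ∈ p.take j := by
    by_contra hxm
    apply hj
    rw [htake]
    exact List.Nodup.append htj (by simp) (by simp [List.disjoint_singleton]; exact hxm)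
  obtain ⟨a, b, hab⟩ := List.append_of_mem hxmem
  refine ⟨a, x, b, p.drop (j+1), ?_, ?_⟩
  · conv_lhs => rw [← List.take_append_drop j p]
    rw [hab, List.drop_eq_getElem_cons hjlen, ← hx]
    simp
  · rw [← hab]; exact htj

lemma walk_to_path (w : α × α → ℝ)
    (hw : ∀ p : List α, 2 ≤ p.length → p.head? = p.getLast? →
      p.dropLast.Nodup → p.Chain' (· ≠ ·) → 0 ≤ ((p.zip p.tail).map w).sum) :
    ∀ (N : ℕ) (p : List α), p.length ≤ N → p ≠ [] → p.Chain' (· ≠ ·) →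
      ∃ q : List α, q ≠ [] ∧ q.head? = p.head? ∧ q.getLast? = p.getLast? ∧ q.Nodup ∧
        ((q.zip q.tail).map w).sum ≤ ((p.zip p.tail).map w).sum := by
  intro N
  induction N with
  | zero => intro p hlen hne _; exact absurd (List.length_eq_zero_iff.mp (by omega)) hne
  | succ N ih =>
    intro p hlen hne hch
    by_cases hnd : p.Nodup
    · exact ⟨p, hne, rfl, rfl, hnd, le_rfl⟩
    · obtain ⟨a, x, b, c, hdecomp, hab⟩ := exists_dup_decomp hnd
      -- the cycle
      set C : List α := (x :: b) ++ [x] with hC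
      have hp2 : p = (a ++ [x]) ++ (b ++ x :: c) := by rw [hdecomp]; simp
      have hp3 : p = (a ++ x :: b) ++ (x :: c) := by rw [hdecomp]; simp
      have hp4 : a ++ C ++ c = p := by rw [hdecomp, hC]; simp
      -- cycle is nonneg
      have hCw : 0 ≤ ((C.zip C.tail).map w).sum := by
        apply hw
        · simp [hC]
        · show C.head? = C.getLast?
          rw [hC, List.getLast?_append_cons]
          rfl
        · rw [hC, List.dropLast_concat]
          exact (List.nodup_append.mp hab).2.1
        · have : C.Chain' (· ≠ ·) := by
            have hinf : C <:+: p := ⟨a, c, hp4⟩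
            exact hch.infix hinf
          exact this
      -- the new walk
      set q0 : List α := a ++ x :: c with hq0
      have hq0ne : q0 ≠ [] := by simp [hq0]
      have hq0len : q0.length < p.length := by
        rw [hdecomp, hq0]; simp
      have hchA : (a ++ [x]).Chain' (· ≠ ·) := by
        rw [hp2] at hch; exact (List.isChain_append.mp hch).1
      have hchXC : (x :: c).Chain' (· ≠ ·) := by
        rw [hp3] at hch; exact (List.isChain_append.mp hch).2.1
      have hq0ch : q0.Chain' (· ≠ ·) := by
        rw [hq0]
        refine List.isChain_append.mpr ⟨(List.isChain_append.mp hchA).1, hchXC, ?_⟩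
        intro y hy z hz
        simp at hz; subst hz
        exact (List.isChain_append.mp hchA).2.2 y hy x (by simp)
      have hq0head : q0.head? = p.head? := by
        rw [hq0, hdecomp]; cases a <;> simp
      have hq0last : q0.getLast? = p.getLast? := by
        rw [hq0, hp3, List.getLast?_append_cons a x c,
          List.getLast?_append_cons (a ++ x :: b) x c]
      have hq0w : ((q0.zip q0.tail).map w).sum ≤ ((p.zip p.tail).map w).sum := by
        have h1 : ((p.zip p.tail).map w).sum
            = (((a ++ [x]).zip (a ++ [x]).tail).map w).sum
              + ((C.zip C.tail).map w).sum + (((x :: c).zip (x :: c).tail).map w).sum := by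
          rw [hdecomp, edges_split x a (b ++ x :: c)]
          have h2 : (x :: (b ++ x :: c)).zip (x :: (b ++ x :: c)).tail
              = ((x :: b) ++ x :: c).zip (((x :: b) ++ x :: c)).tail := by simp
          rw [h2, edges_split x (x :: b) c]
          simp [hC, add_assoc]
        have h3 : ((q0.zip q0.tail).map w).sum
            = (((a ++ [x]).zip (a ++ [x]).tail).map w).sum
              + (((x :: c).zip (x :: c).tail).map w).sum := by
          rw [hq0, edges_split x a c]
          simp
        rw [h1, h3]
        linarith
      obtain ⟨q, hq1, hq2, hq3, hq4, hq5⟩ := ih q0 (by omega) hq0ne hq0ch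
      exact ⟨q, hq1, hq2.trans hq0head, hq3.trans hq0last, hq4, hq5.trans hq0w⟩


lemma relax_nonneg {w : α × α → ℝ} (hw : ∀ e, 0 ≤ w e) :
    ∀ (S : List (α × α)) (d : α → EReal), (∀ u, 0 ≤ d u) → ∀ u, 0 ≤ relaxList w d S u
  | [], d, hd, u => hd u
  | e :: S, d, hd, u => by
    refine relax_nonneg hw S _ (fun v => ?_) u
    unfold relaxStep
    split
    · refine le_min (hd v) ?_
      calc (0:EReal) = 0 + 0 := by simp
        _ ≤ d e.1 + (w e : EReal) := add_le_add (hd e.1) (by exact_mod_cast hw e)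
    · exact hd v

lemma initD_nonneg (s : α) : ∀ u, 0 ≤ initD s u := by
  intro u; unfold initD; split
  · exact le_rfl
  · exact le_top

lemma mem_zip_tail : ∀ {p : List α} {e : α × α}, e ∈ p.zip p.tail →
    ∃ l₁ l₂, p = l₁ ++ e.1 :: e.2 :: l₂ := by
  intro p
  induction p with
  | nil => intro e h; simp at h
  | cons x t ih =>
    intro e h
    cases t with
    | nil => simp at h
    | cons y t' =>
      have h' : e = (x, y) ∨ e ∈ (y :: t').zip ((y :: t').tail) := by
        exact List.mem_cons.mp h
      rcases h' with h1 | h2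
      · exact ⟨[], t', by rw [h1]; rfl⟩
      · obtain ⟨l₁, l₂, hl⟩ := ih h2
        exact ⟨x :: l₁, l₂, by rw [List.cons_append, ← hl]⟩

lemma prefix_eq_of_getLast {p q r : List α} (hp : p.Nodup)
    (hq : q <+: p) (hr : r <+: p) (hq0 : q ≠ []) (hr0 : r ≠ [])
    (h : q.getLast hq0 = r.getLast hr0) : q = r := by
  have key : ∀ {q r : List α} (hq : q <+: p) (hr : r <+: p) (hq0 : q ≠ []) (hr0 : r ≠ []),
      q.getLast hq0 = r.getLast hr0 → q <+: r → q = r := by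
    intro q r hq hr hq0 hr0 h hqr
    have hrnd : r.Nodup := hp.sublist hr.sublist
    have hql : 0 < q.length := List.length_pos_iff.mpr hq0
    have hrl : 0 < r.length := List.length_pos_iff.mpr hr0
    have hlen : q.length ≤ r.length := hqr.length_le
    have hgq : q.getLast hq0 = r[q.length - 1]'(by omega) := by
      rw [List.getLast_eq_getElem]
      exact List.IsPrefix.getElem hqr (by omega)
    have hgr : r.getLast hr0 = r[r.length - 1]'(by omega) := List.getLast_eq_getElem hr0
    rw [hgq, hgr] at h
    have := (hrnd.getElem_inj_iff).mp h
    exact List.IsPrefix.eq_of_length hqr (by omega)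
  rcases List.prefix_or_prefix_of_prefix hq hr with hqr | hrq
  · exact key hq hr hq0 hr0 h hqr
  · exact (key hr hq hr0 hq0 h.symm hrq).symm

lemma getLast_eq_of_getLast? {l : List α} {a : α} (h : l ≠ []) (x : l.getLast? = some a) :
    l.getLast h = a := by
  rw [List.getLast?_eq_getLast h] at x
  exact Option.some.inj x

lemma back_key {p : List α} {s : α} (hne : p ≠ []) (hh : p.head? = some s)
    (hnd : p.Nodup) :
    ∀ (T : List (α × α)) (q : List α) (hq0 : q ≠ []), q <+: p →
      relaxList (fun e => if e ∈ p.zip p.tail then (0:ℝ) else 1) (initD s) T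
        (q.getLast hq0) ≤ 0 →
      (q.zip q.tail).Sublist T := by
  set w : α × α → ℝ := fun e => if e ∈ p.zip p.tail then (0:ℝ) else 1 with hwdef
  have hwnn : ∀ e, 0 ≤ w e := by
    intro e; rw [hwdef]; dsimp only; split <;> norm_num
  intro T
  induction T using List.reverseRecOn with
  | nil =>
    intro q hq0 hqp hle
    have : initD s (q.getLast hq0) ≤ 0 := hle
    have hlast : q.getLast hq0 = s := by
      by_contra hc
      rw [initD] at this
      simp only [if_neg hc] at this
      exact absurd this (by simp)
    -- q is a nonempty prefix of p with head s and last s; p nodup ⇒ q = [s]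
    have hqnd : q.Nodup := hnd.sublist hqp.sublist
    obtain ⟨y, t, rfl⟩ := List.exists_cons_of_ne_nil hq0
    have hy : y = s := by
      obtain ⟨t2, hp2⟩ := hqp
      rw [← hp2] at hh
      simpa using hh
    have ht : t = [] := by
      by_contra htne
      have h1 : (y :: t).getLast hq0 = t.getLast htne := List.getLast_cons htne
      have h2 : t.getLast htne ∈ t := List.getLast_mem htne
      rw [hlast] at h1  -- s = t.getLast
      have : s ∈ t := h1 ▸ h2
      rw [hy] at hqnd
      exact (List.nodup_cons.mp hqnd).1 this
    subst ht
    simp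
  | append_singleton T e ih =>
    intro q hq0 hqp hle
    rw [relaxList_concat] at hle
    set dT := relaxList w (initD s) T with hdT
    by_cases hlq : q.getLast hq0 = e.2
    · have hstep : relaxStep w dT e (q.getLast hq0) = min (dT (q.getLast hq0)) (dT e.1 + (w e : EReal)) := by
        rw [relaxStep, if_pos hlq, hlq]
      rw [hstep] at hle
      rcases min_le_iff.mp hle with h1 | h2
      · exact (ih q hq0 hqp h1).trans (List.sublist_append_left T [e])
      · -- dT e.1 + w e ≤ 0
        have hTnn : ∀ u, 0 ≤ dT u := fun u => relax_nonneg hwnn T (initD s) (initD_nonneg s) u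
        have hwle : (w e : EReal) ≤ 0 := by
          calc (w e : EReal) = 0 + (w e : EReal) := by simp
            _ ≤ dT e.1 + (w e : EReal) := add_le_add_left (hTnn e.1) _
            _ ≤ 0 := h2
        have hw0 : w e = 0 := by
          have h0 : w e ≤ 0 := by exact_mod_cast hwle
          exact le_antisymm h0 (hwnn e)
        have hmem : e ∈ p.zip p.tail := by
          by_contra hc
          rw [hwdef] at hw0
          simp only [if_neg hc] at hw0
          norm_num at hw0
        have hd1 : dT e.1 ≤ 0 := by
          calc dT e.1 = dT e.1 + (w e : EReal) := by rw [hw0]; simp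
            _ ≤ 0 := h2
        obtain ⟨l₁, l₂, hpl⟩ := mem_zip_tail hmem
        -- q = l₁ ++ [e.1, e.2]
        set r : List α := l₁ ++ [e.1, e.2] with hrdef
        have hrp : r <+: p := ⟨l₂, by rw [hpl, hrdef]; simp⟩
        have hr0 : r ≠ [] := by simp [hrdef]
        have hrlast : r.getLast hr0 = e.2 := by
          refine getLast_eq_of_getLast? hr0 ?_
          rw [hrdef]
          rw [show l₁ ++ [e.1, e.2] = (l₁ ++ [e.1]) ++ [e.2] by simp]
          simp
        have hqr : q = r := prefix_eq_of_getLast hnd hqp hrp hq0 hr0 (by rw [hlq, hrlast])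
        -- q' = l₁ ++ [e.1]
        set q' : List α := l₁ ++ [e.1] with hq'def
        have hq'0 : q' ≠ [] := by simp [hq'def]
        have hq'p : q' <+: p := ⟨e.2 :: l₂, by rw [hpl, hq'def]; simp⟩
        have hq'last : q'.getLast hq'0 = e.1 := by
          refine getLast_eq_of_getLast? hq'0 ?_
          rw [hq'def]
          simp
        have hsub' : (q'.zip q'.tail).Sublist T := by
          apply ih q' hq'0 hq'p
          rw [hq'last]; exact hd1
        have hqq' : q = q' ++ [e.2] := by rw [hqr, hrdef, hq'def]; simp
        have hedges : q.zip q.tail = q'.zip q'.tail ++ [(e.1, e.2)] := by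
          rw [hqq']
          exact edges_append_one hq'0 (by rw [List.getLast?_eq_getLast hq'0, hq'last]) e.2
        rw [hedges]
        exact List.Sublist.append hsub' (by simp)
    · have hstep : relaxStep w dT e (q.getLast hq0) = dT (q.getLast hq0) := by
        rw [relaxStep, if_neg hlq]
      rw [hstep] at hle
      exact (ih q hq0 hqp hle).trans (List.sublist_append_left T [e])

end Helpers

/-- `S` is a valid relaxation sequence if and only if, for every edge-weight
function with no negative directed cycle, processing `S` by relaxations computes,
for every vertex `v`, the minimum total weight of a simple path from `s` to `v`. -/
theorem stmt_9 {n : ℕ} (hn : 2 ≤ n) (s : Fin n)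
    (S : List (Fin n × Fin n)) (hSe : ∀ e ∈ S, e.1 ≠ e.2) :
    IsValidRelaxSeq s S ↔
      ∀ w : Fin n × Fin n → ℝ,
        (∀ p : List (Fin n), 2 ≤ p.length → p.head? = p.getLast? →
          p.dropLast.Nodup → p.Chain' (· ≠ ·) → 0 ≤ ((p.zip p.tail).map w).sum) →
        ∀ v : Fin n,
          relaxList w (initD s) S v =
            sInf {c : EReal | ∃ p : List (Fin n),
              p ≠ [] ∧ p.head? = some s ∧ p.getLast? = some v ∧ p.Nodup ∧
              c = ((((p.zip p.tail).map w).sum : ℝ) : EReal)} := by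
  constructor
  · intro hvalid w hw v
    apply _root_.le_antisymm
    · apply le_sInf
      rintro c ⟨p, hne, hh, hl, hnd, rfl⟩
      have hsub := hvalid p hne hh hnd
      refine le_trans (relaxList_sublist hsub (initD s) v) ?_
      rcases p with _ | ⟨y, t⟩
      · exact absurd rfl hne
      · have hy : y = s := by simpa using hh
        have hv : (y :: t).getLast (List.cons_ne_nil _ _) = v :=
          getLast_eq_of_getLast? _ hl
        have hrp := relax_path w t y (initD s)
        rw [hv] at hrp
        refine le_trans hrp ?_
        rw [hy]
        simp [initD]
    · rcases relax_walk_inv w s S hSe v with htop | ⟨p, hne, hh, hl, hch, hval⟩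
      · rw [htop]; exact le_top
      · obtain ⟨q, hq0, hqh, hql, hqnd, hqw⟩ :=
          walk_to_path w hw p.length p le_rfl hne hch
        rw [hval]
        refine le_trans (sInf_le ⟨q, hq0, hqh.trans hh, hql.trans hl, hqnd, rfl⟩) ?_
        exact_mod_cast hqw
  · intro h p hne hh hnd
    by_contra hnsub
    have hwnn : ∀ e : Fin n × Fin n,
        0 ≤ (if e ∈ p.zip p.tail then (0:ℝ) else 1) := by
      intro e; split <;> norm_num
    have hcyc : ∀ p' : List (Fin n), 2 ≤ p'.length → p'.head? = p'.getLast? →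
        p'.dropLast.Nodup → p'.Chain' (· ≠ ·) →
        0 ≤ ((p'.zip p'.tail).map
          (fun e => if e ∈ p.zip p.tail then (0:ℝ) else 1)).sum := by
      intro p' _ _ _ _
      apply List.sum_nonneg
      intro x hx
      obtain ⟨e, _, rfl⟩ := List.mem_map.mp hx
      exact hwnn e
    set v := p.getLast hne with hvdef
    have hv : p.getLast? = some v := List.getLast?_eq_getLast hne
    have heq := h (fun e => if e ∈ p.zip p.tail then (0:ℝ) else 1) hcyc v
    have hsum0 : ((p.zip p.tail).map
        (fun e => if e ∈ p.zip p.tail then (0:ℝ) else 1)).sum = 0 := by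
      apply List.sum_eq_zero
      intro x hx
      obtain ⟨e, he, rfl⟩ := List.mem_map.mp hx
      simp [he]
    have hmem : (0 : EReal) ∈ {c : EReal | ∃ p' : List (Fin n),
        p' ≠ [] ∧ p'.head? = some s ∧ p'.getLast? = some v ∧ p'.Nodup ∧
        c = ((((p'.zip p'.tail).map
          (fun e => if e ∈ p.zip p.tail then (0:ℝ) else 1)).sum : ℝ) : EReal)} :=
      ⟨p, hne, hh, hv, hnd, by rw [hsum0]; simp⟩
    have hle0 : relaxList (fun e => if e ∈ p.zip p.tail then (0:ℝ) else 1)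
        (initD s) S v ≤ 0 := by
      rw [heq]; exact sInf_le hmem
    exact hnsub (back_key hne hh hnd S p hne (List.prefix_refl p) hle0)
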